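/- Let k ≥ 1, ε ∈ (0,1), K > ε, and let e > 0 and n > 0 be reals. Suppose e_0, ..., e_{k-1} are nonnegative reals summing to at least e, and let t with 1 ≤ t ≤ k be such that e_i ≥ (ε/k)·e for i < t and e_i < (ε/k)·e for t ≤ i < k. Let c_0, ..., c_{k-1} be nonnegative reals with c_i ≥ (K−ε)·e_i³/n² for each i < t. Then Σ_{i<k} c_i ≥ (1−3ε)(K−ε)/k² · e³/n². -/
import Mathlib


/-- Core lower-bound inequality: if the large classes (those with `e_i ≥ (ε/k)e`,
indices `i < t`) satisfy `c_i ≥ (K−ε)e_i³/n²`, then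
`∑_{i<k} c_i ≥ (1−3ε)(K−ε)/k² · e³/n²`. -/
theorem stmt4 (k : ℕ) (hk : 1 ≤ k) (ε K e n : ℝ) (hε : 0 < ε) (hε1 : ε < 1)
    (hK : ε < K) (he : 0 < e) (hn : 0 < n)
    (E : ℕ → ℝ) (hE : ∀ i ∈ Finset.range k, 0 ≤ E i)
    (hsum : e ≤ ∑ i ∈ Finset.range k, E i)
    (t : ℕ) (ht1 : 1 ≤ t) (htk : t ≤ k)
    (hbig : ∀ i < t, (ε / k) * e ≤ E i)
    (hsmall : ∀ i, t ≤ i → i < k → E i < (ε / k) * e)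
    (c : ℕ → ℝ) (hc0 : ∀ i ∈ Finset.range k, 0 ≤ c i)
    (hc : ∀ i < t, (K - ε) * (E i) ^ 3 / n ^ 2 ≤ c i) :
    (1 - 3 * ε) * (K - ε) / (k : ℝ) ^ 2 * (e ^ 3 / n ^ 2)
      ≤ ∑ i ∈ Finset.range k, c i := by
  have hk0 : (0:ℝ) < k := by exact_mod_cast hk
  have hsumc : (0:ℝ) ≤ ∑ i ∈ Finset.range k, c i := Finset.sum_nonneg hc0
  by_cases h3 : 1 - 3 * ε ≤ 0
  · have : (1 - 3 * ε) * (K - ε) / (k : ℝ) ^ 2 * (e ^ 3 / n ^ 2) ≤ 0 := by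
      apply mul_nonpos_of_nonpos_of_nonneg
      · apply div_nonpos_of_nonpos_of_nonneg
        · exact mul_nonpos_of_nonpos_of_nonneg h3 (by linarith)
        · positivity
      · positivity
    linarith
  push_neg at h3
  -- split the sum
  have hsplit : ∑ i ∈ Finset.range k, E i
      = ∑ i ∈ Finset.range t, E i + ∑ i ∈ Finset.Ico t k, E i := by
    exact (Finset.sum_range_add_sum_Ico _ htk).symm
  have hcardIco : ((Finset.Ico t k).card : ℝ) ≤ k := by
    rw [Nat.card_Ico]; exact_mod_cast Nat.sub_le k t
  have hsmallsum : ∑ i ∈ Finset.Ico t k, E i ≤ ε * e := by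
    calc ∑ i ∈ Finset.Ico t k, E i
        ≤ ∑ _i ∈ Finset.Ico t k, (ε / k) * e :=
          Finset.sum_le_sum fun i hi => le_of_lt
            (hsmall i (Finset.mem_Ico.mp hi).1 (Finset.mem_Ico.mp hi).2)
      _ = ((Finset.Ico t k).card : ℝ) * ((ε / k) * e) := by
          rw [Finset.sum_const, nsmul_eq_mul]
      _ ≤ (k : ℝ) * ((ε / k) * e) := by
          apply mul_le_mul_of_nonneg_right hcardIco; positivity
      _ = ε * e := by field_simp
  set S := ∑ i ∈ Finset.range t, E i with hSdef
  have hS : (1 - ε) * e ≤ S := by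
    have := hsum
    rw [hsplit] at this
    linarith
  have hSpos : 0 < S := lt_of_lt_of_le (by nlinarith) hS
  -- Jensen
  have hEt : ∀ i ∈ Finset.range t, 0 ≤ E i := fun i hi =>
    hE i (Finset.mem_range.mpr (lt_of_lt_of_le (Finset.mem_range.mp hi) htk))
  have hJ : S ^ 3 / ((Finset.range t).card : ℝ) ^ 2
      ≤ ∑ i ∈ Finset.range t, E i ^ 3 := by
    have := pow_sum_div_card_le_sum_pow (f := E) (n := 2) hEt
    simpa using this
  have hcard : ((Finset.range t).card : ℝ) = t := by simp
  have ht0 : (0:ℝ) < t := by exact_mod_cast ht1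
  have htk' : (t:ℝ) ≤ k := by exact_mod_cast htk
  have hJ2 : ((1 - ε) * e) ^ 3 / (k : ℝ) ^ 2 ≤ ∑ i ∈ Finset.range t, E i ^ 3 := by
    refine le_trans ?_ hJ
    rw [hcard]
    apply div_le_div₀ (by positivity)
      (pow_le_pow_left₀ (by nlinarith) hS 3)
      (by positivity)
      (by nlinarith)
  have hKe : (0:ℝ) < K - ε := by linarith
  have hsum3 : (K - ε) * (((1 - ε) * e) ^ 3 / (k : ℝ) ^ 2) / n ^ 2
      ≤ ∑ i ∈ Finset.range t, c i := by
    calc (K - ε) * (((1 - ε) * e) ^ 3 / (k : ℝ) ^ 2) / n ^ 2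
        ≤ (K - ε) * (∑ i ∈ Finset.range t, E i ^ 3) / n ^ 2 := by
          apply div_le_div_of_nonneg_right _ (by positivity)
          exact mul_le_mul_of_nonneg_left hJ2 (le_of_lt hKe)
      _ = ∑ i ∈ Finset.range t, (K - ε) * E i ^ 3 / n ^ 2 := by
          rw [Finset.mul_sum, Finset.sum_div]
      _ ≤ ∑ i ∈ Finset.range t, c i :=
          Finset.sum_le_sum fun i hi => hc i (Finset.mem_range.mp hi)
  have hsub : ∑ i ∈ Finset.range t, c i ≤ ∑ i ∈ Finset.range k, c i := by
    apply Finset.sum_le_sum_of_subset_of_nonneg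
      (Finset.range_subset_range.mpr htk)
    intro i hi _; exact hc0 i hi
  have hfinal : (1 - 3 * ε) * (K - ε) / (k : ℝ) ^ 2 * (e ^ 3 / n ^ 2)
      ≤ (K - ε) * (((1 - ε) * e) ^ 3 / (k : ℝ) ^ 2) / n ^ 2 := by
    have h13 : (1 - 3 * ε) ≤ (1 - ε) ^ 3 := by
      nlinarith [mul_nonneg (sq_nonneg ε) (by linarith : (0:ℝ) ≤ 3 - ε)]
    have : (1 - 3*ε) * e ^ 3 ≤ ((1-ε)*e)^3 := by
      rw [mul_pow]
      exact mul_le_mul_of_nonneg_right h13 (by positivity)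
    have key : (1 - 3 * ε) * e ^ 3 ≤ ((1 - ε) * e) ^ 3 := by
      rw [mul_pow]
      exact mul_le_mul_of_nonneg_right h13 (by positivity)
    calc (1 - 3 * ε) * (K - ε) / (k:ℝ) ^ 2 * (e ^ 3 / n ^ 2)
        = (K - ε) / ((k:ℝ) ^ 2 * n ^ 2) * ((1 - 3 * ε) * e ^ 3) := by ring
      _ ≤ (K - ε) / ((k:ℝ) ^ 2 * n ^ 2) * ((1 - ε) * e) ^ 3 :=
          mul_le_mul_of_nonneg_left key (by positivity)
      _ = (K - ε) * (((1 - ε) * e) ^ 3 / (k:ℝ) ^ 2) / n ^ 2 := by ring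
  linarith
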